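/- Let n ∈ ℕ, T ≥ 0, let L, R₁, R₂ be n×n complex unitary matrices, let Σ₁, Γₛ, Γᵣ be n×n real diagonal matrices with nonnegative diagonal entries σ₁ᵢ, γ_{s,i}, γ_{r,i}, and set H₁ = L Σ₁ R₁ᴴ, Qₛ = R₁ Γₛ R₁ᴴ, Qᵣ = R₂ Γᵣ R₂ᴴ. Then the infimum over all n×n complex matrices H̄ᵣ with Tr(H̄ᵣ H̄ᵣᴴ) ≤ T of the source-relay rate R^FD_sr(H̄ᵣ) = log₂(det(I + H₁ Qₛ H₁ᴴ + H̄ᵣ Qᵣ H̄ᵣᴴ)/det(I + H̄ᵣ Qᵣ H̄ᵣᴴ)) is at most the infimum, over all σ : Fin n → ℝ with σᵢ ≥ 0 and Σᵢ σᵢ² ≤ T, of Σᵢ log₂(1 + σ₁ᵢ² γ_{s,i}/(1 + γ_{r,i} σᵢ²)). -/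

import Mathlib

/-!
For each admissible `σ`, the RSI channel `H̄ᵣ = L diag(σ) R₂ᴴ` shares its left
singular vectors with `H₁` and its right ones with `Qᵣ`. Then `H₁QₛH₁ᴴ` and `H̄ᵣQᵣH̄ᵣᴴ` are
simultaneously diagonalised by `L`, so both determinants factor into per-stream products and the
rate of `H̄ᵣ` is exactly the objective of the scalar program at `σ`; moreover
`Tr(H̄ᵣH̄ᵣᴴ) = Σᵢ σᵢ²`. Hence every value of the scalar program is a value of the matrix program.
-/

open Matrix

namespace Matrix

variable {n R : Type*} [Fintype n] [DecidableEq n]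

section Semiring

variable [Semiring R] [StarRing R]

theorem mul_mul_conjTranspose_mul_conj {U V A : Matrix n n R} (hV : Vᴴ * V = 1) :
    (U * A * Vᴴ) * (U * A * Vᴴ)ᴴ = U * (A * Aᴴ) * Uᴴ := by
  simp only [conjTranspose_mul, conjTranspose_conjTranspose, Matrix.mul_assoc]
  rw [← Matrix.mul_assoc Vᴴ, hV, Matrix.one_mul]

theorem mul_mul_mul_conjTranspose_mul_conj {U V A B : Matrix n n R} (hV : Vᴴ * V = 1) :
    (U * A * Vᴴ) * (V * B * Vᴴ) * (U * A * Vᴴ)ᴴ = U * (A * B * Aᴴ) * Uᴴ := by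
  simp only [conjTranspose_mul, conjTranspose_conjTranspose, Matrix.mul_assoc]
  rw [← Matrix.mul_assoc Vᴴ V, hV, Matrix.one_mul, ← Matrix.mul_assoc Vᴴ V, hV, Matrix.one_mul]

end Semiring

section CommRing

variable [CommRing R] [StarRing R]

theorem trace_mul_mul_conjTranspose {U A : Matrix n n R} (hU : Uᴴ * U = 1) :
    (U * A * Uᴴ).trace = A.trace := by
  rw [trace_mul_cycle, hU, Matrix.one_mul]

theorem det_mul_mul_conjTranspose {U A : Matrix n n R} (hU : Uᴴ * U = 1) :
    (U * A * Uᴴ).det = A.det := by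
  rw [det_mul, det_mul, mul_comm, ← mul_assoc, ← det_mul, hU, det_one, one_mul]

theorem one_add_mul_mul_conjTranspose {U A : Matrix n n R} (hU : Uᴴ * U = 1) :
    1 + U * A * Uᴴ = U * (1 + A) * Uᴴ := by
  rw [Matrix.mul_add, Matrix.add_mul, Matrix.mul_one, mul_eq_one_comm.mp hU]

theorem det_one_add_mul_diagonal_mul_conjTranspose {U : Matrix n n R} (hU : Uᴴ * U = 1)
    (d : n → R) : (1 + U * diagonal d * Uᴴ).det = ∏ i, (1 + d i) := by
  rw [one_add_mul_mul_conjTranspose hU, det_mul_mul_conjTranspose hU, ← diagonal_one,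
    diagonal_add, det_diagonal]

end CommRing

theorem det_one_add_mul_diagonal_ofReal_mul_conjTranspose {U : Matrix n n ℂ} (hU : Uᴴ * U = 1)
    (d : n → ℝ) : (1 + U * diagonal (fun i => (d i : ℂ)) * Uᴴ).det = ((∏ i, (1 + d i) : ℝ) : ℂ) := by
  rw [det_one_add_mul_diagonal_mul_conjTranspose hU]
  push_cast
  rfl

theorem diagonal_ofReal_mul_mul_conjTranspose (a b : n → ℝ) :
    diagonal (fun i => (a i : ℂ)) * diagonal (fun i => (b i : ℂ)) *
      (diagonal fun i => (a i : ℂ))ᴴ = diagonal fun i => ((a i ^ 2 * b i : ℝ) : ℂ) := by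
  rw [diagonal_conjTranspose, diagonal_mul_diagonal, diagonal_mul_diagonal]
  congr 1
  funext i
  simp only [Pi.star_apply, Complex.star_def, Complex.conj_ofReal]
  push_cast
  ring

end Matrix

/-- `sInf A = 0` when `A` is unbounded below, hence the lower bound `0` on `B`. -/
theorem Real.sInf_le_sInf_of_subset {A B : Set ℝ} (hB : B.Nonempty) (hB₀ : ∀ y ∈ B, 0 ≤ y)
    (hBA : B ⊆ A) : sInf A ≤ sInf B := by
  by_cases hA : BddBelow A
  · exact csInf_le_csInf hA hB hBA
  · rw [Real.sInf_of_not_bddBelow hA]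
    exact Real.sInf_nonneg hB₀

theorem logb_one_add_div_nonneg {a b : ℝ} (ha : 0 ≤ a) (hb : 0 ≤ b) :
    0 ≤ Real.logb 2 (1 + a / (1 + b)) :=
  Real.logb_nonneg one_lt_two (le_add_of_nonneg_right (div_nonneg ha (by linarith)))

theorem logb_prod_div_prod {n : Type*} [Fintype n] {a b : n → ℝ} (ha : ∀ i, 0 ≤ a i)
    (hb : ∀ i, 0 ≤ b i) :
    Real.logb 2 ((∏ i, (1 + (a i + b i))) / ∏ i, (1 + b i)) =
      ∑ i, Real.logb 2 (1 + a i / (1 + b i)) := by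
  have hb₁ (i : n) : 0 < 1 + b i := by linarith [hb i]
  rw [← Finset.prod_div_distrib, Real.logb_prod]
  · refine Finset.sum_congr rfl fun i _ => ?_
    rw [add_div' _ _ _ (hb₁ i).ne']
    ring_nf
  · intro i _
    exact (div_pos (by linarith [ha i, hb i]) (hb₁ i)).ne'

theorem stmt_14_general (n : ℕ) (T : ℝ) (hT : 0 ≤ T)
    (L R1 R2 : Matrix (Fin n) (Fin n) ℂ)
    (hL : Lᴴ * L = 1) (hR1 : R1ᴴ * R1 = 1) (hR2 : R2ᴴ * R2 = 1)
    (σ1 γs γr : Fin n → ℝ)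
    (hγs : ∀ i, 0 ≤ γs i) (hγr : ∀ i, 0 ≤ γr i)
    (H1 Qs Qr : Matrix (Fin n) (Fin n) ℂ)
    (hH1 : H1 = L * (Matrix.diagonal fun i => (σ1 i : ℂ)) * R1ᴴ)
    (hQs : Qs = R1 * (Matrix.diagonal fun i => (γs i : ℂ)) * R1ᴴ)
    (hQr : Qr = R2 * (Matrix.diagonal fun i => (γr i : ℂ)) * R2ᴴ) :
    sInf {y : ℝ | ∃ Hr : Matrix (Fin n) (Fin n) ℂ,
        (Matrix.trace (Hr * Hrᴴ)).re ≤ T ∧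
        y = Real.logb 2
          (((1 + H1 * Qs * H1ᴴ + Hr * Qr * Hrᴴ).det /
            (1 + Hr * Qr * Hrᴴ).det).re)} ≤
    sInf {y : ℝ | ∃ σ : Fin n → ℝ, (∀ i, 0 ≤ σ i) ∧ (∑ i, (σ i) ^ 2) ≤ T ∧
        y = ∑ i, Real.logb 2 (1 + (σ1 i) ^ 2 * γs i / (1 + γr i * (σ i) ^ 2))} := by
  refine Real.sInf_le_sInf_of_subset ⟨_, 0, fun _ => le_rfl, by simpa using hT, rfl⟩ ?_ ?_
  · rintro y ⟨σ, -, -, rfl⟩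
    exact Finset.sum_nonneg fun i _ =>
      logb_one_add_div_nonneg (mul_nonneg (sq_nonneg _) (hγs i)) (mul_nonneg (hγr i) (sq_nonneg _))
  rintro y ⟨σ, -, hσT, rfl⟩
  refine ⟨L * diagonal (fun i => (σ i : ℂ)) * R2ᴴ, ?_, ?_⟩
  · rw [mul_mul_conjTranspose_mul_conj hR2, trace_mul_mul_conjTranspose hL,
      diagonal_conjTranspose, diagonal_mul_diagonal, trace_diagonal]
    simpa [Complex.re_sum, sq] using hσT
  · have hsignal : H1 * Qs * H1ᴴ = L * diagonal (fun i => ((σ1 i ^ 2 * γs i : ℝ) : ℂ)) * Lᴴ := by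
      rw [hH1, hQs, mul_mul_mul_conjTranspose_mul_conj hR1, diagonal_ofReal_mul_mul_conjTranspose]
    rw [hsignal, hQr, mul_mul_mul_conjTranspose_mul_conj hR2,
      diagonal_ofReal_mul_mul_conjTranspose, add_assoc, ← Matrix.add_mul, ← Matrix.mul_add,
      diagonal_add]
    simp only [← Complex.ofReal_add]
    rw [det_one_add_mul_diagonal_ofReal_mul_conjTranspose hL,
      det_one_add_mul_diagonal_ofReal_mul_conjTranspose hL, ← Complex.ofReal_div, Complex.ofReal_re,
      logb_prod_div_prod (fun i => mul_nonneg (sq_nonneg _) (hγs i))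
        (fun i => mul_nonneg (sq_nonneg _) (hγr i))]
    simp only [mul_comm (σ _ ^ 2)]

/-- Achievability direction of Proposition 1: the worst-case source–relay rate over
all RSI channels with `Tr(H̄ᵣH̄ᵣᴴ) ≤ T` is at most the optimal value of the scalar
program over singular values `σ` with `Σᵢ σᵢ² ≤ T`. -/
theorem stmt_14 (n : ℕ) (T : ℝ) (hT : 0 ≤ T)
    (L R1 R2 : Matrix (Fin n) (Fin n) ℂ)
    (hL : Lᴴ * L = 1) (hR1 : R1ᴴ * R1 = 1) (hR2 : R2ᴴ * R2 = 1)
    (σ1 γs γr : Fin n → ℝ)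
    (hσ1 : ∀ i, 0 ≤ σ1 i) (hγs : ∀ i, 0 ≤ γs i) (hγr : ∀ i, 0 ≤ γr i)
    (H1 Qs Qr : Matrix (Fin n) (Fin n) ℂ)
    (hH1 : H1 = L * (Matrix.diagonal fun i => (σ1 i : ℂ)) * R1ᴴ)
    (hQs : Qs = R1 * (Matrix.diagonal fun i => (γs i : ℂ)) * R1ᴴ)
    (hQr : Qr = R2 * (Matrix.diagonal fun i => (γr i : ℂ)) * R2ᴴ) :
    sInf {y : ℝ | ∃ Hr : Matrix (Fin n) (Fin n) ℂ,
        (Matrix.trace (Hr * Hrᴴ)).re ≤ T ∧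
        y = Real.logb 2
          (((1 + H1 * Qs * H1ᴴ + Hr * Qr * Hrᴴ).det /
            (1 + Hr * Qr * Hrᴴ).det).re)} ≤
    sInf {y : ℝ | ∃ σ : Fin n → ℝ, (∀ i, 0 ≤ σ i) ∧ (∑ i, (σ i) ^ 2) ≤ T ∧
        y = ∑ i, Real.logb 2 (1 + (σ1 i) ^ 2 * γs i / (1 + γr i * (σ i) ^ 2))} :=
  stmt_14_general n T hT L R1 R2 hL hR1 hR2 σ1 γs γr hγs hγr H1 Qs Qr hH1 hQs hQr
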